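/- Let N ≥ 1, D ≥ 1, u ∈ ℝ^D, m : Fin N → ℝ^D, and w : Fin N → ℝ with w j > 0 for all j, and suppose ‖u − m j*‖ < ‖u − m j‖ for all j ≠ j* for some index j*. For σ > 0 let q_σ(j) = w j · exp(−‖u − m j‖² / (2σ²)) / Σ_k w k · exp(−‖u − m k‖² / (2σ²)). Then the Shannon entropy H(q_σ) = −Σ_j q_σ(j) log q_σ(j) tends to 0 as σ → 0⁺. -/

import Mathlib

/-!
The posterior weights are Gibbs weights `w i * exp (-d i / s) / ∑ k, w k * exp (-d k / s)` at
temperature `s = 2σ²`. Subtracting the minimal energy `d i₀` from every `d i` does not change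
them, and afterwards each unnormalised weight except that of `i₀` decays like `exp (-c / s)`
with `c > 0`, so the weights converge to the one-hot vector at `i₀`. Entropy is continuous and
vanishes on one-hot vectors.
-/

open Finset Real Filter

/-- Shannon entropy of a finitely supported vector, with the convention
`0 * log 0 = 0` (which holds since `Real.log 0 = 0`). -/
noncomputable def shannonEntropy {α : Type*} [Fintype α] (q : α → ℝ) : ℝ :=
  -∑ a, q a * Real.log (q a)

open Topology

section Entropy

variable {α : Type*} [Fintype α]

theorem continuous_shannonEntropy : Continuous (shannonEntropy : (α → ℝ) → ℝ) :=
  (continuous_finsetSum _ fun a _ => continuous_mul_log.comp (continuous_apply a)).neg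

theorem shannonEntropy_pi_single [DecidableEq α] (a : α) :
    shannonEntropy (Pi.single a 1 : α → ℝ) = 0 := by
  simp [shannonEntropy, Pi.single_apply, apply_ite]

end Entropy

section Gibbs

variable {ι : Type*} [Fintype ι]

noncomputable def gibbsWeights (w d : ι → ℝ) (s : ℝ) : ι → ℝ :=
  fun i => w i * exp (-d i / s) / ∑ k, w k * exp (-d k / s)

theorem gibbsWeights_sub_const (w d : ι → ℝ) (c s : ℝ) :
    gibbsWeights w (fun i => d i - c) s = gibbsWeights w d s := by
  have hshift : ∀ i, w i * exp (-(d i - c) / s) = w i * exp (-d i / s) * exp (c / s) := by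
    intro i
    rw [mul_assoc, ← exp_add]
    ring_nf
  ext i
  simp only [gibbsWeights, hshift, ← Finset.sum_mul]
  exact mul_div_mul_right _ _ (exp_pos _).ne'

theorem tendsto_exp_neg_div_nhdsGT_zero {c : ℝ} (hc : 0 < c) :
    Tendsto (fun s : ℝ => exp (-c / s)) (𝓝[>] 0) (𝓝 0) := by
  have : Tendsto (fun s : ℝ => -c / s) (𝓝[>] 0) atBot := by
    simpa only [div_eq_mul_inv] using
      (tendsto_const_mul_atBot_of_neg (neg_neg_of_pos hc)).mpr tendsto_inv_nhdsGT_zero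
  exact tendsto_exp_atBot.comp this

theorem tendsto_gibbsWeights [DecidableEq ι] {w d : ι → ℝ} {i₀ : ι} (hw : w i₀ ≠ 0)
    (hmin : ∀ i, i ≠ i₀ → d i₀ < d i) :
    Tendsto (gibbsWeights w d) (𝓝[>] 0) (𝓝 (Pi.single i₀ 1)) := by
  have hterm : ∀ i, Tendsto (fun s => w i * exp (-(d i - d i₀) / s)) (𝓝[>] 0)
      (𝓝 ((Pi.single i₀ (w i₀) : ι → ℝ) i)) := by
    intro i
    rcases eq_or_ne i i₀ with rfl | hi
    · simp
    · simpa [hi] using (tendsto_exp_neg_div_nhdsGT_zero (sub_pos.2 (hmin i hi))).const_mul (w i)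
  have hsum : Tendsto (fun s => ∑ k, w k * exp (-(d k - d i₀) / s)) (𝓝[>] 0) (𝓝 (w i₀)) := by
    simpa using tendsto_finsetSum univ fun k _ => hterm k
  rw [← funext (gibbsWeights_sub_const w d (d i₀)), tendsto_pi_nhds]
  intro i
  have hlimit : (Pi.single i₀ (w i₀) : ι → ℝ) i / w i₀ = (Pi.single i₀ 1 : ι → ℝ) i := by
    rcases eq_or_ne i i₀ with rfl | hi <;> simp [*]
  rw [← hlimit]
  exact (hterm i).div hsum hw

end Gibbs

theorem entropy_gaussianPosterior_tendsto_zero_general {N D : ℕ}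
    (u : EuclideanSpace ℝ (Fin D)) (m : Fin N → EuclideanSpace ℝ (Fin D))
    (w : Fin N → ℝ) (hw : ∀ j, 0 < w j) (jstar : Fin N)
    (hmin : ∀ j, j ≠ jstar → ‖u - m jstar‖ < ‖u - m j‖) :
    Tendsto
      (fun σ : ℝ =>
        shannonEntropy (fun j : Fin N =>
          w j * Real.exp (-‖u - m j‖ ^ 2 / (2 * σ ^ 2)) /
            ∑ k, w k * Real.exp (-‖u - m k‖ ^ 2 / (2 * σ ^ 2))))
      (nhdsWithin 0 (Set.Ioi 0)) (nhds 0) := by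
  have htemp : Tendsto (fun σ : ℝ => 2 * σ ^ 2) (𝓝[>] 0) (𝓝[>] 0) := by
    refine tendsto_nhdsWithin_of_tendsto_nhds_of_eventually_within _ ?_ ?_
    · exact ((by fun_prop : Continuous fun σ : ℝ => 2 * σ ^ 2).tendsto' 0 0 (by simp)).mono_left
        nhdsWithin_le_nhds
    · filter_upwards [self_mem_nhdsWithin] with σ (hσ : 0 < σ)
      exact Set.mem_Ioi.2 (by positivity)
  have hposterior := (tendsto_gibbsWeights (d := fun j => ‖u - m j‖ ^ 2) (hw jstar).ne'
    fun j hj => pow_lt_pow_left₀ (hmin j hj) (norm_nonneg _) two_ne_zero).comp htemp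
  have hentropy := (continuous_shannonEntropy.tendsto _).comp hposterior
  rw [shannonEntropy_pi_single] at hentropy
  exact hentropy

/-- As `σ → 0⁺`, the Shannon entropy of the Gaussian posterior weights
`q_σ(j) = w j * exp(-‖u - m j‖²/(2σ²)) / ∑ k, w k * exp(-‖u - m k‖²/(2σ²))`
tends to `0`, the posterior becoming one-hot at the unique nearest mean. -/
theorem entropy_gaussianPosterior_tendsto_zero {N D : ℕ} (hN : 1 ≤ N) (hD : 1 ≤ D)
    (u : EuclideanSpace ℝ (Fin D)) (m : Fin N → EuclideanSpace ℝ (Fin D))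
    (w : Fin N → ℝ) (hw : ∀ j, 0 < w j) (jstar : Fin N)
    (hmin : ∀ j, j ≠ jstar → ‖u - m jstar‖ < ‖u - m j‖) :
    Tendsto
      (fun σ : ℝ =>
        shannonEntropy (fun j : Fin N =>
          w j * Real.exp (-‖u - m j‖ ^ 2 / (2 * σ ^ 2)) /
            ∑ k, w k * Real.exp (-‖u - m k‖ ^ 2 / (2 * σ ^ 2))))
      (nhdsWithin 0 (Set.Ioi 0)) (nhds 0) :=
  entropy_gaussianPosterior_tendsto_zero_general u m w hw jstar hmin
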